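/- Let a and d be positive integers with a dividing d, and set q = d/a. Let B(θ) be the 4×4 block-diagonal matrix diag(R(aθ), R(dθ)). Let G : ℂ \ {0} → M₄(ℝ) be a C^∞ function taking symmetric matrix values, satisfying G(e^{iaθ}z) = B(θ)·G(z)·B(θ)ᵀ for all θ ∈ ℝ and z ∈ ℂ \ {0}, and such that for all real t > 0: G(t)₁₁ = G(t)₂₂ = 1, G(t)₁₂ = 0, G(t)₁₃ = 0 and G(t)₁₄ = 0. If G extends to a C^∞ function on all of ℂ, then there exist C^∞ functions φ₁, φ₂ : ℝ → ℝ such that G(t)₂₃ = t^{q+1}·φ₁(t²) and G(t)₂₄ = t^{q+1}·φ₂(t²) for all real t > 0. -/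

import Mathlib

/-!
Combine four entries of the smooth extension `Ge` into `H = (Ge₀₂ - Ge₁₃) + i (Ge₀₃ + Ge₁₂)`.
The equivariance of `G` makes `H (e^{is} z) = e^{i(q+1)s} H z` (first for `z ≠ 0`, then by
continuity for all `z`). Evaluating the `m`-th derivative of `H` at `0` on the diagonal
`(e^{is}, …, e^{is})` gives a trigonometric polynomial of degree `≤ m` that equals
`e^{i(q+1)s}` times the `m`-th derivative of `t ↦ H t` at `0`; by orthogonality of the
exponentials these derivatives vanish for `m ≤ q`. Hence `H t = t^{q+1} e(t)` with `e` smooth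
(Hadamard's lemma), and `e` is even since `H (-t) = (-1)^{q+1} H t`. By Whitney's theorem, proved
from Borel's lemma, `e t = ψ (t²)` with `ψ` smooth. For `t > 0` the entries `G₀₂`, `G₀₃` vanish,
so `G₁₂` and `-G₁₃` are the imaginary and real parts of `H t`.
-/

open Matrix

/-- The 4×4 block-diagonal matrix `diag(R(θ₁), R(θ₂))` built out of 2×2
rotation matrices. -/
noncomputable def blockRot4 (θ₁ θ₂ : ℝ) : Matrix (Fin 4) (Fin 4) ℝ :=
  !![Real.cos θ₁, -Real.sin θ₁, 0, 0;
     Real.sin θ₁, Real.cos θ₁, 0, 0;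
     0, 0, Real.cos θ₂, -Real.sin θ₂;
     0, 0, Real.sin θ₂, Real.cos θ₂]

open Set Filter Topology
open scoped ContDiff

section DerivativeChain

variable {E : Type*} [NormedAddCommGroup E] [NormedSpace ℝ E]

theorem iteratedDeriv_eq_of_hasDerivAt_succ {F : ℕ → ℝ → E}
    (hF : ∀ m t, HasDerivAt (F m) (F (m + 1) t) t) (k m : ℕ) :
    iteratedDeriv k (F m) = F (m + k) := by
  induction k with
  | zero => rfl
  | succ k ih => rw [iteratedDeriv_succ, ih]; exact funext fun t => (hF (m + k) t).deriv

theorem contDiff_of_hasDerivAt_succ {F : ℕ → ℝ → E}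
    (hF : ∀ m t, HasDerivAt (F m) (F (m + 1) t) t) (m : ℕ) : ContDiff ℝ ∞ (F m) :=
  contDiff_of_differentiable_iteratedDeriv fun k _ => by
    rw [iteratedDeriv_eq_of_hasDerivAt_succ hF]
    exact fun t => (hF (m + k) t).differentiableAt

theorem hasDerivAt_succ_of_continuousAt_zero {F : ℕ → ℝ → E}
    (hF : ∀ m t, t ≠ 0 → HasDerivAt (F m) (F (m + 1) t) t) (hc : ∀ m, ContinuousAt (F m) 0)
    (m : ℕ) (t : ℝ) : HasDerivAt (F m) (F (m + 1) t) t := by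
  rcases eq_or_ne t 0 with rfl | ht
  · exact hasDerivAt_of_hasDerivAt_of_ne (fun y hy => hF m y hy) (hc m) (hc (m + 1))
  · exact hF m t ht

theorem contDiff_indicator_Ioi_of_hasDerivAt {G : ℕ → ℝ → E}
    (hG : ∀ m u, 0 < u → HasDerivAt (G m) (G (m + 1) u) u)
    (hG0 : ∀ m, Tendsto (G m) (𝓝[>] 0) (𝓝 0)) :
    ContDiff ℝ ∞ ((Ioi 0).indicator (G 0)) := by
  have hd : ∀ m u, u ≠ 0 →
      HasDerivAt ((Ioi 0).indicator (G m)) ((Ioi 0).indicator (G (m + 1)) u) u := by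
    intro m u hu
    rcases hu.lt_or_gt with hu | hu
    · rw [indicator_of_notMem (notMem_Ioi.2 hu.le)]
      refine (hasDerivAt_const u 0).congr_of_eventuallyEq ?_
      filter_upwards [Iio_mem_nhds hu] with w hw
      exact indicator_of_notMem (notMem_Ioi.2 hw.le) _
    · rw [indicator_of_mem (show u ∈ Ioi 0 from hu)]
      refine (hG m u hu).congr_of_eventuallyEq ?_
      filter_upwards [Ioi_mem_nhds hu] with w hw
      exact indicator_of_mem hw _
  have hc : ∀ m, ContinuousAt ((Ioi 0).indicator (G m)) 0 := fun m => by
    refine continuousAt_iff_continuous_left'_right'.2 ⟨?_, ?_⟩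
    · exact continuousWithinAt_const.congr
        (fun w hw => indicator_of_notMem (notMem_Ioi.2 hw.le) _)
        (indicator_of_notMem (notMem_Ioi.2 le_rfl) _)
    · rw [ContinuousWithinAt, indicator_of_notMem (notMem_Ioi.2 le_rfl)]
      exact (hG0 m).congr' (eventually_nhdsWithin_of_forall fun w hw => (indicator_of_mem hw _).symm)
  exact contDiff_of_hasDerivAt_succ (hasDerivAt_succ_of_continuousAt_zero hd hc) 0

end DerivativeChain

section Hadamard

variable {E : Type*} [NormedAddCommGroup E] [NormedSpace ℝ E]

theorem hasDerivAt_integral_pow_smul_comp_mul {φ φ' : ℝ → E}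
    (hφ : ∀ x, HasDerivAt φ (φ' x) x) (hφ' : Continuous φ') (m : ℕ) (t : ℝ) :
    HasDerivAt (fun t => ∫ u in (0 : ℝ)..1, u ^ m • φ (t * u))
      (∫ u in (0 : ℝ)..1, u ^ (m + 1) • φ' (t * u)) t := by
  obtain ⟨C, hC⟩ := (isCompact_closedBall (0 : ℝ) (|t| + 1)).exists_bound_of_continuousOn
    hφ'.continuousOn
  have hφc : Continuous φ := continuous_iff_continuousAt.2 fun x => (hφ x).continuousAt
  have hF : ∀ x, Continuous fun u : ℝ => u ^ m • φ (x * u) := fun x => by fun_prop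
  refine (intervalIntegral.hasDerivAt_integral_of_dominated_loc_of_deriv_le
    (F := fun x u => u ^ m • φ (x * u)) (F' := fun x u => u ^ (m + 1) • φ' (x * u))
    (bound := fun _ => C) (Metric.ball_mem_nhds t one_pos)
    (Eventually.of_forall fun x => (hF x).aestronglyMeasurable)
    ((hF t).intervalIntegrable _ _) (by fun_prop : Continuous fun u : ℝ =>
      u ^ (m + 1) • φ' (t * u)).aestronglyMeasurable ?_ intervalIntegrable_const ?_).2
  · refine Eventually.of_forall fun u hu x hx => ?_
    rw [uIoc_of_le zero_le_one] at hu
    have hxu : |x * u| ≤ |t| + 1 := by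
      rw [abs_mul, abs_of_pos hu.1]
      have := abs_sub_abs_le_abs_sub x t
      rw [Metric.mem_ball, Real.dist_eq] at hx
      nlinarith [abs_nonneg x, hu.2]
    calc ‖u ^ (m + 1) • φ' (x * u)‖ = |u| ^ (m + 1) * ‖φ' (x * u)‖ := by
          rw [norm_smul, norm_pow, Real.norm_eq_abs]
      _ ≤ 1 * C := by
          gcongr
          · exact pow_le_one₀ (abs_nonneg u) (by rw [abs_of_pos hu.1]; exact hu.2)
          · exact hC _ (by simpa using hxu)
      _ = C := one_mul C
  · refine Eventually.of_forall fun u _ x _ => ?_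
    have := ((hφ (x * u)).scomp x (hasDerivAt_mul_const u)).const_smul (u ^ m)
    rwa [smul_smul, ← pow_succ] at this

/-- `hadamardQuotient f 0 t = (f t - f 0) / t` for `t ≠ 0`, and `hadamardQuotient f m` is its
`m`-th derivative. -/
noncomputable def hadamardQuotient (f : ℝ → E) (m : ℕ) (t : ℝ) : E :=
  ∫ u in (0 : ℝ)..1, u ^ m • iteratedDeriv (m + 1) f (t * u)

variable {f : ℝ → E}

theorem hasDerivAt_hadamardQuotient (hf : ContDiff ℝ ∞ f) (m : ℕ) (t : ℝ) :
    HasDerivAt (hadamardQuotient f m) (hadamardQuotient f (m + 1) t) t := by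
  refine hasDerivAt_integral_pow_smul_comp_mul (fun x => ?_)
    (hf.continuous_iteratedDeriv _ (by exact_mod_cast le_top)) m t
  rw [iteratedDeriv_succ (n := m + 1)]
  exact ((hf.differentiable_iteratedDeriv _ (by exact_mod_cast WithTop.coe_lt_top _)) x).hasDerivAt

variable [CompleteSpace E]

theorem hadamardQuotient_apply_zero (m : ℕ) :
    hadamardQuotient f m 0 = ((m : ℝ) + 1)⁻¹ • iteratedDeriv (m + 1) f 0 := by
  simp only [hadamardQuotient, zero_mul]
  rw [intervalIntegral.integral_smul_const, integral_pow]
  norm_num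

theorem apply_eq_apply_zero_add_smul_hadamardQuotient (hf : ContDiff ℝ ∞ f) (t : ℝ) :
    f t = f 0 + t • hadamardQuotient f 0 t := by
  have hd : ∀ u, HasDerivAt (fun u => f (t * u)) (t • deriv f (t * u)) u := fun u =>
    ((hf.differentiable (by simp)) (t * u)).hasDerivAt.scomp u (hasDerivAt_const_mul t)
  have hd' : Continuous fun u => t • deriv f (t * u) := by
    have := hf.continuous_deriv (by simp); fun_prop
  have := intervalIntegral.integral_eq_sub_of_hasDerivAt (a := 0) (b := 1) (fun u _ => hd u)
    (hd'.intervalIntegrable _ _)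
  simp only [mul_one, mul_zero, intervalIntegral.integral_smul] at this
  simp [hadamardQuotient, this]

theorem exists_contDiff_eq_pow_smul_of_iteratedDeriv_eq_zero {n : ℕ} (hf : ContDiff ℝ ∞ f)
    (hjet : ∀ m < n, iteratedDeriv m f 0 = 0) :
    ∃ g : ℝ → E, ContDiff ℝ ∞ g ∧ ∀ t, f t = t ^ n • g t := by
  induction n generalizing f with
  | zero => exact ⟨f, hf, fun t => by simp⟩
  | succ n ih =>
    have hQ := hasDerivAt_hadamardQuotient hf
    obtain ⟨g, hg, hfg⟩ := ih (contDiff_of_hasDerivAt_succ hQ 0) fun m hm => by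
      rw [iteratedDeriv_eq_of_hasDerivAt_succ hQ, zero_add, hadamardQuotient_apply_zero,
        hjet (m + 1) (by omega), smul_zero]
    refine ⟨g, hg, fun t => ?_⟩
    rw [apply_eq_apply_zero_add_smul_hadamardQuotient hf, hfg, ← iteratedDeriv_zero (f := f),
      hjet 0 n.succ_pos, zero_add, smul_smul, pow_succ']

end Hadamard

section Borel

variable {E : Type*} [NormedAddCommGroup E] [NormedSpace ℝ E]

theorem iteratedDeriv_comp_const_mul_smul_const {ρ : ℝ → ℝ} (hρ : ContDiff ℝ ∞ ρ) (c : ℝ)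
    (v : E) (k : ℕ) :
    iteratedDeriv k (fun u => ρ (c * u) • v) = fun u => (c ^ k * iteratedDeriv k ρ (c * u)) • v := by
  have hρc : ContDiff ℝ ∞ fun u => ρ (c * u) := hρ.comp (contDiff_const.mul contDiff_id)
  ext u
  rw [iteratedDeriv_smul_const (hρc.contDiffAt.of_le (by exact_mod_cast le_top)),
    iteratedDeriv_comp_const_mul (hρ.of_le (by exact_mod_cast le_top))]

theorem exists_one_le_pow_mul_le_half_pow (M : ℕ → ℕ → ℝ) :
    ∃ r : ℕ → ℝ, (∀ m, 1 ≤ r m) ∧ ∀ k m, k < m → r m ^ k * M m k ≤ (1 / 2) ^ m * r m ^ m := by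
  refine ⟨fun m => max 1 (2 ^ m * ∑ j ∈ Finset.range m, |M m j|), fun m => le_max_left _ _,
    fun k m hkm => ?_⟩
  set r := max 1 (2 ^ m * ∑ j ∈ Finset.range m, |M m j|)
  have hr : 1 ≤ r := le_max_left _ _
  have hM : M m k ≤ (1 / 2) ^ m * r := by
    calc M m k ≤ ∑ j ∈ Finset.range m, |M m j| :=
          (le_abs_self _).trans (Finset.single_le_sum (fun j _ => abs_nonneg (M m j))
            (Finset.mem_range.2 hkm))
      _ = (1 / 2) ^ m * (2 ^ m * ∑ j ∈ Finset.range m, |M m j|) := by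
          rw [← mul_assoc, ← mul_pow]; norm_num
      _ ≤ (1 / 2) ^ m * r := by gcongr; exact le_max_right _ _
  calc r ^ k * M m k ≤ r ^ k * ((1 / 2) ^ m * r) := by gcongr
    _ = (1 / 2) ^ m * r ^ (k + 1) := by ring
    _ ≤ (1 / 2) ^ m * r ^ m := by gcongr (1 / 2) ^ m * ?_; exact pow_le_pow_right₀ hr hkm

theorem iteratedDeriv_tsum_apply [CompleteSpace E] {f : ℕ → ℝ → E} {v : ℕ → ℕ → ℝ}
    (hf : ∀ i, ContDiff ℝ ∞ (f i)) (hv : ∀ k, Summable (v k))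
    (hfv : ∀ k i x, ‖iteratedDeriv k (f i) x‖ ≤ v k i) (k : ℕ) (x : ℝ) :
    iteratedDeriv k (fun y => ∑' i, f i y) x = ∑' i, iteratedDeriv k (f i) x := by
  have hfv' : ∀ k i x, ‖iteratedFDeriv ℝ k (f i) x‖ ≤ v k i := fun k i x => by
    rw [norm_iteratedFDeriv_eq_norm_iteratedDeriv]; exact hfv k i x
  rw [iteratedDeriv_eq_iteratedFDeriv, iteratedFDeriv_tsum_apply (N := ⊤) hf (fun k _ => hv k)
    (fun k i x _ => hfv' k i x) le_top]
  exact (ContinuousMultilinearMap.apply ℝ (fun _ : Fin k => ℝ) E fun _ => 1).map_tsum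
    ((hv k).of_norm_bounded fun i => hfv' k i x)

theorem exists_contDiff_hasCompactSupport_iteratedDeriv_zero_eq (m : ℕ) :
    ∃ ρ : ℝ → ℝ, ContDiff ℝ ∞ ρ ∧ HasCompactSupport ρ ∧
      ∀ k, iteratedDeriv k ρ 0 = if k = m then (m.factorial : ℝ) else 0 := by
  let χ : ContDiffBump (0 : ℝ) := ⟨1, 2, one_pos, one_lt_two⟩
  refine ⟨(· ^ m) * ⇑χ, (contDiff_id.pow m).mul χ.contDiff, χ.hasCompactSupport.mul_left,
    fun k => ?_⟩
  calc iteratedDeriv k ((· ^ m) * ⇑χ) 0 = iteratedDeriv k (· ^ m) (0 : ℝ) := by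
        refine Filter.EventuallyEq.iteratedDeriv_eq k ?_
        filter_upwards [χ.eventuallyEq_one] with w hw
        simp [hw]
    _ = _ := by rw [iteratedDeriv_fun_pow_zero]; split_ifs <;> simp

/-- Borel's lemma. -/
theorem exists_contDiff_iteratedDeriv_zero_eq [CompleteSpace E] (L : ℕ → E) :
    ∃ b : ℝ → E, ContDiff ℝ ∞ b ∧ ∀ k, iteratedDeriv k b 0 = L k := by
  choose ρ hρ hρs hρ0 using exists_contDiff_hasCompactSupport_iteratedDeriv_zero_eq
  choose B hB using fun m k => by
    simpa only [norm_iteratedFDeriv_eq_norm_iteratedDeriv] using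
      ((hρ m).continuous_iteratedFDeriv (by exact_mod_cast le_top)).bounded_above_of_compact_support
        ((hρs m).iteratedFDeriv k)
  -- the rescaling by `r m` makes the derivatives of order `< m` of the `m`-th term at most `2⁻ᵐ`
  obtain ⟨r, hr1, hr⟩ := exists_one_le_pow_mul_le_half_pow fun m k => B m k * (‖L m‖ / m.factorial)
  have hr0 : ∀ m, 0 < r m := fun m => one_pos.trans_le (hr1 m)
  set c : ℕ → E := fun m => ((m.factorial : ℝ) * r m ^ m)⁻¹ • L m
  have hc : ∀ m, ‖c m‖ = ‖L m‖ / m.factorial / r m ^ m := fun m => by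
    simp [c, norm_smul, abs_of_pos (hr0 m)]
    ring
  set f : ℕ → ℝ → E := fun m u => ρ m (r m * u) • c m
  have hf : ∀ m, ContDiff ℝ ∞ (f m) := fun m =>
    ((hρ m).comp (contDiff_const.mul contDiff_id)).smul contDiff_const
  have hfk : ∀ m k u, iteratedDeriv k (f m) u = (r m ^ k * iteratedDeriv k (ρ m) (r m * u)) • c m :=
    fun m k u => congrFun (iteratedDeriv_comp_const_mul_smul_const (hρ m) (r m) (c m) k) u
  set v : ℕ → ℕ → ℝ := fun k m => r m ^ k * B m k * ‖c m‖
  have hfv : ∀ k m x, ‖iteratedDeriv k (f m) x‖ ≤ v k m := fun k m x => by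
    rw [hfk, norm_smul, norm_mul, norm_pow, Real.norm_of_nonneg (hr0 m).le]
    exact mul_le_mul_of_nonneg_right (mul_le_mul_of_nonneg_left (hB m k _)
      (pow_nonneg (hr0 m).le k)) (norm_nonneg _)
  have hv : ∀ k, Summable (v k) := fun k => by
    refine Summable.of_norm_bounded_eventually_nat summable_geometric_two ?_
    filter_upwards [eventually_gt_atTop k] with m hkm
    rw [Real.norm_of_nonneg ((norm_nonneg _).trans (hfv k m 0))]
    calc v k m = r m ^ k * (B m k * (‖L m‖ / m.factorial)) / r m ^ m := by simp only [v, hc]; ring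
      _ ≤ (1 / 2) ^ m := by rw [div_le_iff₀ (pow_pos (hr0 m) m)]; exact hr k m hkm
  have hfk0 : ∀ m k, iteratedDeriv k (f m) 0 = if m = k then L k else 0 := fun m k => by
    rw [hfk, mul_zero, hρ0]
    rcases eq_or_ne m k with rfl | hmk
    · rw [if_pos rfl, if_pos rfl, smul_smul, mul_comm (r m ^ m), mul_inv_cancel₀ (mul_ne_zero
        (Nat.cast_ne_zero.2 m.factorial_ne_zero) (pow_ne_zero _ (hr0 m).ne')), one_smul]
    · rw [if_neg hmk.symm, if_neg hmk, mul_zero, zero_smul]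
  refine ⟨fun u => ∑' m, f m u, contDiff_tsum hf (fun k _ => hv k)
    (fun k m x _ => (norm_iteratedFDeriv_eq_norm_iteratedDeriv).trans_le (hfv k m x)), fun k => ?_⟩
  rw [iteratedDeriv_tsum_apply hf hv hfv]
  simp_rw [hfk0, tsum_ite_eq]

end Borel

section EvenFunction

variable {E : Type*} [NormedAddCommGroup E] [NormedSpace ℝ E]

theorem Function.Even.odd_deriv {g : ℝ → E} (hg : Function.Even g) : Function.Odd (deriv g) :=
  fun t => by
    have := deriv_comp_neg (f := g) (x := -t)
    rw [funext hg, neg_neg] at this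
    rw [this]

variable [CompleteSpace E]

theorem exists_even_contDiff_deriv_eq_smul {g : ℝ → E} (hg : ContDiff ℝ ∞ g)
    (hev : Function.Even g) :
    ∃ g₁ : ℝ → E, ContDiff ℝ ∞ g₁ ∧ Function.Even g₁ ∧ ∀ t, deriv g t = t • g₁ t := by
  obtain ⟨g₁, hg₁, hgg₁⟩ := exists_contDiff_eq_pow_smul_of_iteratedDeriv_eq_zero (n := 1)
    (hg.iterate_deriv 1) fun m hm => by
      rw [Nat.lt_one_iff.1 hm, iteratedDeriv_zero]
      have h0 := hev.odd_deriv 0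
      rw [neg_zero, eq_neg_iff_add_eq_zero, ← two_smul ℝ] at h0
      exact (smul_eq_zero.1 h0).resolve_left two_ne_zero
  simp only [Function.iterate_one, pow_one] at hgg₁
  refine ⟨g₁, hg₁, fun t => ?_, hgg₁⟩
  rcases eq_or_ne t 0 with rfl | ht
  · rw [neg_zero]
  · refine smul_right_injective E ht ?_
    have := hev.odd_deriv t
    rw [hgg₁, hgg₁, neg_smul, neg_inj] at this
    exact this

theorem exists_seq_hasDerivAt_eq_smul_succ {e : ℝ → E} (he : ContDiff ℝ ∞ e)
    (hev : Function.Even e) :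
    ∃ es : ℕ → ℝ → E, es 0 = e ∧ (∀ m, ContDiff ℝ ∞ (es m)) ∧
      ∀ m t, HasDerivAt (es m) (t • es (m + 1) t) t := by
  let P : (ℝ → E) → Prop := fun g => ContDiff ℝ ∞ g ∧ Function.Even g
  have step : ∀ g : Subtype P, ∃ g₁ : Subtype P, ∀ t, deriv g.1 t = t • g₁.1 t := by
    rintro ⟨g, hg, hev⟩
    obtain ⟨g₁, hg₁, hev₁, h⟩ := exists_even_contDiff_deriv_eq_smul hg hev
    exact ⟨⟨g₁, hg₁, hev₁⟩, h⟩
  choose T hT using step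
  refine ⟨fun m => (T^[m] ⟨e, he, hev⟩).1, rfl, fun m => (T^[m] _).2.1, fun m t => ?_⟩
  show HasDerivAt (T^[m] _).1 (t • (T^[m + 1] _).1 t) t
  rw [Function.iterate_succ_apply', ← hT]
  exact ((T^[m] _).2.1.differentiable (by simp) t).hasDerivAt

/-- Whitney's theorem on even functions. -/
theorem exists_contDiff_comp_sq_of_even {e : ℝ → E} (he : ContDiff ℝ ∞ e)
    (hev : Function.Even e) :
    ∃ ψ : ℝ → E, ContDiff ℝ ∞ ψ ∧ ∀ t, e t = ψ (t ^ 2) := by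
  obtain ⟨es, rfl, hes, hdes⟩ := exists_seq_hasDerivAt_eq_smul_succ he hev
  -- `u ↦ es 0 (√u)` has `m`-th derivative `(1/2)^m • es m (√u)` on `u > 0`
  obtain ⟨b, hb, hbm⟩ := exists_contDiff_iteratedDeriv_zero_eq fun m => ((1 : ℝ) / 2) ^ m • es m 0
  set G : ℕ → ℝ → E := fun m u => ((1 : ℝ) / 2) ^ m • es m (√u) - iteratedDeriv m b u
  have hG : ∀ m u, 0 < u → HasDerivAt (G m) (G (m + 1) u) u := by
    intro m u hu
    have := ((hdes m √u).scomp u (Real.hasDerivAt_sqrt hu.ne')).const_smul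
      (((1 : ℝ) / 2) ^ m) |>.sub ((hb.differentiable_iteratedDeriv m
        (by exact_mod_cast WithTop.coe_lt_top _) u).hasDerivAt)
    refine this.congr_deriv ?_
    rw [← iteratedDeriv_succ, smul_smul, smul_smul]
    congr 2
    field_simp
    ring
  have hG0 : ∀ m, Tendsto (G m) (𝓝[>] 0) (𝓝 0) := fun m => by
    have hc : Continuous (G m) := by
      have := (hes m).continuous
      have := hb.continuous_iteratedDeriv m (by exact_mod_cast le_top)
      fun_prop
    have h0 : G m 0 = 0 := by simp [G, hbm]
    exact h0 ▸ hc.continuousAt.tendsto.mono_left nhdsWithin_le_nhds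
  refine ⟨(Ioi 0).indicator (G 0) + b, (contDiff_indicator_Ioi_of_hasDerivAt hG hG0).add hb,
    fun t => ?_⟩
  rw [Pi.add_apply]
  rcases eq_or_ne t 0 with rfl | ht
  · rw [indicator_of_notMem (notMem_Ioi.2 (by simp)), zero_add, sq, zero_mul,
      ← iteratedDeriv_zero (f := b), hbm, pow_zero, one_smul]
  · rw [indicator_of_mem (mem_Ioi.2 (by positivity))]
    simp only [G, pow_zero, one_smul, iteratedDeriv_zero, Real.sqrt_sq_eq_abs, sub_add_cancel]
    rcases abs_choice t with h | h <;> rw [h]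
    exact (hev t).symm

end EvenFunction

section TrigPoly

open Complex

def trigPoly (m : ℕ) : Submodule ℂ (ℝ → ℂ) :=
  Submodule.span ℂ ((fun l : ℤ => fun s : ℝ => exp (l * s * I)) '' Icc (-(m : ℤ)) m)

theorem exp_mem_trigPoly {m : ℕ} {l : ℤ} (hl : |l| ≤ m) :
    (fun s : ℝ => exp (l * s * I)) ∈ trigPoly m :=
  Submodule.subset_span ⟨l, abs_le.1 hl, rfl⟩

theorem trigPoly_mul_le (a b : ℕ) : trigPoly a * trigPoly b ≤ trigPoly (a + b) := by
  rw [trigPoly, trigPoly, Submodule.span_mul_span]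
  refine Submodule.span_le.2 ?_
  rintro _ ⟨_, ⟨k, hk, rfl⟩, _, ⟨l, hl, rfl⟩, rfl⟩
  have hkl : (fun s : ℝ => exp (k * s * I)) * (fun s : ℝ => exp (l * s * I)) =
      fun s : ℝ => exp ((k + l : ℤ) * s * I) := by
    ext s; rw [Pi.mul_apply, ← exp_add]; push_cast; ring_nf
  show _ * _ ∈ trigPoly (a + b)
  rw [hkl]
  exact exp_mem_trigPoly (abs_le.2 (by simp only [mem_Icc] at hk hl; omega))

theorem one_mem_trigPoly_zero : (1 : ℝ → ℂ) ∈ trigPoly 0 := by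
  have := exp_mem_trigPoly (m := 0) (l := 0) le_rfl
  simp only [Int.cast_zero, zero_mul, exp_zero] at this
  exact this

theorem ofReal_cos_mem_trigPoly_one : (fun s : ℝ => (Real.cos s : ℂ)) ∈ trigPoly 1 := by
  convert Submodule.smul_mem _ (2⁻¹ : ℂ) (Submodule.add_mem _
    (exp_mem_trigPoly (m := 1) (l := 1) (by simp)) (exp_mem_trigPoly (m := 1) (l := -1) (by simp)))
    using 1
  ext s
  simp only [Pi.smul_apply, Pi.add_apply, ofReal_cos, smul_eq_mul]
  rw [cos, Int.cast_one, Int.cast_neg, Int.cast_one]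
  ring_nf

theorem ofReal_sin_mem_trigPoly_one : (fun s : ℝ => (Real.sin s : ℂ)) ∈ trigPoly 1 := by
  convert Submodule.smul_mem _ (I / 2) (Submodule.sub_mem _
    (exp_mem_trigPoly (m := 1) (l := -1) (by simp)) (exp_mem_trigPoly (m := 1) (l := 1) (by simp)))
    using 1
  ext s
  simp only [Pi.smul_apply, Pi.sub_apply, ofReal_sin, smul_eq_mul]
  rw [sin, Int.cast_one, Int.cast_neg, Int.cast_one]
  ring_nf

theorem prod_mem_trigPoly {ι : Type*} (s : Finset ι) {f : ι → ℝ → ℂ}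
    (hf : ∀ i ∈ s, f i ∈ trigPoly 1) : ∏ i ∈ s, f i ∈ trigPoly s.card := by
  classical
  induction s using Finset.induction_on with
  | empty => exact one_mem_trigPoly_zero
  | insert i s hi ih =>
    rw [Finset.prod_insert hi, Finset.card_insert_of_notMem hi, add_comm]
    exact trigPoly_mul_le _ _ (Submodule.mul_mem_mul (hf i (Finset.mem_insert_self i s))
      (ih fun j hj => hf j (Finset.mem_insert_of_mem hj)))

theorem multilinearMap_apply_exp_mem_trigPoly {m : ℕ}
    (T : MultilinearMap ℝ (fun _ : Fin m => ℂ) ℂ) :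
    (fun s : ℝ => T fun _ => exp (s * I)) ∈ trigPoly m := by
  classical
  let c : Fin 2 → ℝ → ℝ := ![Real.cos, Real.sin]
  let b : Fin 2 → ℂ := ![1, I]
  have hexp : ∀ s : ℝ, exp (s * I) = ∑ j, c j s • b j := fun s => by
    simp [c, b, exp_mul_I, ← ofReal_cos, ← ofReal_sin]
  have hc : ∀ j, (fun s : ℝ => (c j s : ℂ)) ∈ trigPoly 1 := by
    intro j; fin_cases j
    exacts [ofReal_cos_mem_trigPoly_one, ofReal_sin_mem_trigPoly_one]
  simp_rw [hexp, T.map_sum, T.map_smul_univ]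
  rw [← Finset.sum_fn]
  refine Submodule.sum_mem _ fun r _ => ?_
  convert Submodule.smul_mem _ (T fun i => b (r i))
    (prod_mem_trigPoly Finset.univ fun i _ => hc (r i)) using 1
  · simp
  · ext s
    simp [Finset.prod_apply, real_smul, mul_comm]

theorem continuous_of_mem_trigPoly {m : ℕ} {f : ℝ → ℂ} (hf : f ∈ trigPoly m) : Continuous f := by
  induction hf using Submodule.span_induction with
  | mem g hg => obtain ⟨l, -, rfl⟩ := hg; fun_prop
  | zero => exact continuous_const
  | add f g _ _ hf hg => exact hf.add hg
  | smul c f _ hf => exact hf.const_smul c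

theorem integral_mul_exp_eq_zero_of_mem_trigPoly {m n : ℕ} (hmn : m < n) {f : ℝ → ℂ}
    (hf : f ∈ trigPoly m) : ∫ s in (0 : ℝ)..2 * Real.pi, f s * exp (-(n * s * I)) = 0 := by
  induction hf using Submodule.span_induction with
  | mem g hg =>
    obtain ⟨l, hl, rfl⟩ := hg
    have hln : ((l - n : ℤ) : ℂ) * I ≠ 0 :=
      mul_ne_zero (Int.cast_ne_zero.2 (by simp only [mem_Icc] at hl; omega)) I_ne_zero
    have : ∀ s : ℝ, exp (l * s * I) * exp (-(n * s * I)) = exp (((l - n : ℤ) * I) * s) := by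
      intro s; rw [← exp_add]; push_cast; ring_nf
    simp_rw [this, integral_exp_mul_complex hln]
    rw [show ((l - n : ℤ) * I) * ((2 * Real.pi : ℝ) : ℂ) = (l - n : ℤ) * (2 * Real.pi * I) by
      push_cast; ring, exp_int_mul_two_pi_mul_I]
    simp
  | zero => simp
  | add f g hf hg hf₀ hg₀ =>
    have hf' := continuous_of_mem_trigPoly hf
    have hg' := continuous_of_mem_trigPoly hg
    simp_rw [Pi.add_apply, add_mul]
    rw [intervalIntegral.integral_add (by apply Continuous.intervalIntegrable; fun_prop)
      (by apply Continuous.intervalIntegrable; fun_prop), hf₀, hg₀, add_zero]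
  | smul c f _ hf₀ =>
    simp only [Pi.smul_apply, smul_eq_mul, mul_assoc c, intervalIntegral.integral_const_mul, hf₀,
      mul_zero]

end TrigPoly

section Equivariant

open Complex

theorem Continuous.apply_mul_eq_mul_of_ne_zero {H : ℂ → ℂ} (hH : Continuous H) {w c : ℂ}
    (h : ∀ z ≠ 0, H (w * z) = c * H z) (z : ℂ) : H (w * z) = c * H z :=
  congrFun ((hH.comp (continuous_const.mul continuous_id)).ext_on (dense_compl_singleton 0)
    (continuous_const.mul hH) h) z

theorem iteratedDeriv_comp_smul_apply_zero {E F : Type*} [NormedAddCommGroup E] [NormedSpace ℝ E]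
    [NormedAddCommGroup F] [NormedSpace ℝ F] {H : E → F} (hH : ContDiff ℝ ∞ H) (w : E) (m : ℕ) :
    iteratedDeriv m (fun t : ℝ => H (t • w)) 0 = iteratedFDeriv ℝ m H 0 fun _ => w := by
  have := congrArg (fun Φ => Φ fun _ => (1 : ℝ))
    ((ContinuousLinearMap.toSpanSingleton ℝ w).iteratedFDeriv_comp_right hH 0 (i := m)
      (by exact_mod_cast le_top))
  simpa [iteratedDeriv_eq_iteratedFDeriv, Function.comp_def] using this

theorem iteratedDeriv_ofReal_eq_zero_of_equivariant {H : ℂ → ℂ} (hH : ContDiff ℝ ∞ H) {n : ℕ}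
    (heq : ∀ (s : ℝ) (z : ℂ), H (exp (s * I) * z) = exp (n * s * I) * H z) {m : ℕ}
    (hm : m < n) : iteratedDeriv m (fun t : ℝ => H t) 0 = 0 := by
  set c := iteratedDeriv m (fun t : ℝ => H t) 0
  have hT : ∀ s : ℝ, iteratedFDeriv ℝ m H 0 (fun _ => exp (s * I)) = exp (n * s * I) * c := by
    intro s
    rw [← iteratedDeriv_comp_smul_apply_zero hH]
    simp_rw [real_smul, mul_comm _ (exp _), heq]
    exact iteratedDeriv_const_mul_field _ _
  have hmem := multilinearMap_apply_exp_mem_trigPoly (iteratedFDeriv ℝ m H 0).toMultilinearMap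
  simp only [ContinuousMultilinearMap.coe_coe, hT] at hmem
  have := integral_mul_exp_eq_zero_of_mem_trigPoly hm hmem
  simp_rw [mul_right_comm _ c, ← exp_add, add_neg_cancel, exp_zero, one_mul] at this
  simpa [Real.pi_ne_zero] using this

theorem exists_contDiff_eq_pow_mul_comp_sq_of_equivariant {H : ℂ → ℂ} (hH : ContDiff ℝ ∞ H)
    {n : ℕ} (heq : ∀ (s : ℝ) (z : ℂ), H (exp (s * I) * z) = exp (n * s * I) * H z) :
    ∃ ψ : ℝ → ℂ, ContDiff ℝ ∞ ψ ∧ ∀ t : ℝ, H t = t ^ n * ψ (t ^ 2) := by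
  obtain ⟨e, he, hHe⟩ := exists_contDiff_eq_pow_smul_of_iteratedDeriv_eq_zero
    (hH.comp ofRealCLM.contDiff) fun m hm => iteratedDeriv_ofReal_eq_zero_of_equivariant hH heq hm
  simp only [Function.comp_apply, ofRealCLM_apply, real_smul, ofReal_pow] at hHe
  have hev : Function.Even e := fun t => by
    rcases eq_or_ne t 0 with rfl | ht
    · rw [neg_zero]
    have hexp : exp (n * Real.pi * I) = (-1) ^ n := by
      rw [mul_assoc, exp_nat_mul, exp_pi_mul_I]
    have := heq Real.pi t
    rw [exp_pi_mul_I, hexp, neg_one_mul, ← ofReal_neg, hHe, hHe, ofReal_neg, neg_pow,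
      mul_assoc] at this
    exact mul_left_cancel₀ (pow_ne_zero n (ofReal_ne_zero.2 ht))
      (mul_left_cancel₀ (pow_ne_zero n (neg_ne_zero.2 one_ne_zero)) this)
  obtain ⟨ψ, hψ, heψ⟩ := exists_contDiff_comp_sq_of_even he hev
  exact ⟨ψ, hψ, fun t => by rw [hHe, heψ]⟩

end Equivariant

section SliceModule

open Complex

/-- The `ℂ`-linear part `(m₀₂ - m₁₃) + (m₀₃ + m₁₂) i` of the upper right `2 × 2` block, viewed as
a real-linear map `ℂ → ℂ`: rotating the block by `R(α)` on the left and `R(β)ᵀ` on the right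
multiplies it by `e^{i(α+β)}`. -/
def upperRightBlockToComplex (M : Matrix (Fin 4) (Fin 4) ℝ) : ℂ :=
  ⟨M 0 2 - M 1 3, M 0 3 + M 1 2⟩

theorem contDiff_upperRightBlockToComplex {E : Type*} [NormedAddCommGroup E] [NormedSpace ℝ E]
    {M : E → Matrix (Fin 4) (Fin 4) ℝ} (hM : ∀ i j, ContDiff ℝ ∞ fun x => M x i j) :
    ContDiff ℝ ∞ fun x => upperRightBlockToComplex (M x) :=
  equivRealProdCLM.symm.contDiff.comp
    (((hM 0 2).sub (hM 1 3)).prodMk ((hM 0 3).add (hM 1 2)))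

theorem upperRightBlockToComplex_blockRot4_mul_mul_transpose (α β : ℝ)
    (M : Matrix (Fin 4) (Fin 4) ℝ) :
    upperRightBlockToComplex (blockRot4 α β * M * (blockRot4 α β)ᵀ) =
      exp ((α + β : ℝ) * I) * upperRightBlockToComplex M := by
  simp only [upperRightBlockToComplex, Complex.ext_iff, mul_re, mul_im, exp_ofReal_mul_I_re,
    exp_ofReal_mul_I_im, Real.cos_add, Real.sin_add]
  constructor <;> simp [blockRot4, mul_apply, Fin.sum_univ_four, vecMul, dotProduct] <;> ring

end SliceModule

theorem order_of_vanishing_of_slice_module_products_general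
    (a d : ℕ) (ha : 0 < a) (hdvd : a ∣ d)
    (G : ℂ → Matrix (Fin 4) (Fin 4) ℝ)
    (hequiv : ∀ (θ : ℝ) (z : ℂ), z ≠ 0 →
      G (Complex.exp ((a * θ : ℝ) * Complex.I) * z) =
        blockRot4 (a * θ) (d * θ) * G z * (blockRot4 (a * θ) (d * θ))ᵀ)
    (h13 : ∀ t : ℝ, 0 < t → G (t : ℂ) 0 2 = 0)
    (h14 : ∀ t : ℝ, 0 < t → G (t : ℂ) 0 3 = 0)
    (hext : ∃ Ge : ℂ → Matrix (Fin 4) (Fin 4) ℝ,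
        (∀ i j : Fin 4, ContDiff ℝ (⊤ : ℕ∞) fun z => Ge z i j) ∧
        ∀ z : ℂ, z ≠ 0 → Ge z = G z) :
    ∃ φ₁ φ₂ : ℝ → ℝ,
      ContDiff ℝ (⊤ : ℕ∞) φ₁ ∧ ContDiff ℝ (⊤ : ℕ∞) φ₂ ∧
      ∀ t : ℝ, 0 < t →
        G (t : ℂ) 1 2 = t ^ (d / a + 1) * φ₁ (t ^ 2) ∧
        G (t : ℂ) 1 3 = t ^ (d / a + 1) * φ₂ (t ^ 2) := by
  obtain ⟨Ge, hGe, hGeG⟩ := hext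
  obtain ⟨q, rfl⟩ := hdvd
  rw [Nat.mul_div_cancel_left q ha]
  set H : ℂ → ℂ := fun z => upperRightBlockToComplex (Ge z)
  have hH : ContDiff ℝ ∞ H := contDiff_upperRightBlockToComplex hGe
  have heq : ∀ (s : ℝ) (z : ℂ),
      H (Complex.exp (s * Complex.I) * z) = Complex.exp ((q + 1 : ℕ) * s * Complex.I) * H z := by
    refine fun s => hH.continuous.apply_mul_eq_mul_of_ne_zero fun z hz => ?_
    have hGs := hequiv (s / a) z hz
    rw [mul_div_cancel₀ s (by positivity)] at hGs
    simp only [H, hGeG z hz, hGeG _ (mul_ne_zero (Complex.exp_ne_zero _) hz), hGs,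
      upperRightBlockToComplex_blockRot4_mul_mul_transpose]
    have ha' : (a : ℂ) ≠ 0 := by exact_mod_cast ha.ne'
    congr 2
    push_cast
    field_simp
    ring
  obtain ⟨ψ, hψ, hHψ⟩ := exists_contDiff_eq_pow_mul_comp_sq_of_equivariant hH heq
  refine ⟨fun u => (ψ u).im, fun u => -(ψ u).re, Complex.imCLM.contDiff.comp hψ,
    (Complex.reCLM.contDiff.comp hψ).neg, fun t ht => ?_⟩
  have hHt := hHψ t
  simp only [H, hGeG _ (Complex.ofReal_ne_zero.2 ht.ne'), upperRightBlockToComplex, h13 t ht,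
    h14 t ht, ← Complex.ofReal_pow, Complex.ext_iff, Complex.re_ofReal_mul, Complex.im_ofReal_mul]
    at hHt
  constructor <;> linarith [hHt.1, hHt.2]

theorem order_of_vanishing_of_slice_module_products
    (a d : ℕ) (ha : 0 < a) (hd : 0 < d) (hdvd : a ∣ d)
    (G : ℂ → Matrix (Fin 4) (Fin 4) ℝ)
    (hsmooth : ∀ i j : Fin 4, ContDiffOn ℝ (⊤ : ℕ∞) (fun z => G z i j) {0}ᶜ)
    (hsymm : ∀ z : ℂ, z ≠ 0 → (G z).IsSymm)
    (hequiv : ∀ (θ : ℝ) (z : ℂ), z ≠ 0 →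
      G (Complex.exp ((a * θ : ℝ) * Complex.I) * z) =
        blockRot4 (a * θ) (d * θ) * G z * (blockRot4 (a * θ) (d * θ))ᵀ)
    (h11 : ∀ t : ℝ, 0 < t → G (t : ℂ) 0 0 = 1)
    (h22 : ∀ t : ℝ, 0 < t → G (t : ℂ) 1 1 = 1)
    (h12 : ∀ t : ℝ, 0 < t → G (t : ℂ) 0 1 = 0)
    (h13 : ∀ t : ℝ, 0 < t → G (t : ℂ) 0 2 = 0)
    (h14 : ∀ t : ℝ, 0 < t → G (t : ℂ) 0 3 = 0)
    (hext : ∃ Ge : ℂ → Matrix (Fin 4) (Fin 4) ℝ,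
        (∀ i j : Fin 4, ContDiff ℝ (⊤ : ℕ∞) fun z => Ge z i j) ∧
        ∀ z : ℂ, z ≠ 0 → Ge z = G z) :
    ∃ φ₁ φ₂ : ℝ → ℝ,
      ContDiff ℝ (⊤ : ℕ∞) φ₁ ∧ ContDiff ℝ (⊤ : ℕ∞) φ₂ ∧
      ∀ t : ℝ, 0 < t →
        G (t : ℂ) 1 2 = t ^ (d / a + 1) * φ₁ (t ^ 2) ∧
        G (t : ℂ) 1 3 = t ^ (d / a + 1) * φ₂ (t ^ 2) :=
  order_of_vanishing_of_slice_module_products_general a d ha hdvd G hequiv h13 h14 hext
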